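/- arXiv:1311.0531 — 5 statements merged into one kernel-verified Lean document; each statement's English description precedes it below -/
import Mathlib

section
/- If A and B are finite non-collinear subsets of ℝ², then b_{A+B} ≥ b_A + b_B, where b_A denotes the number of points of A lying on the frontier of the convex hull of A. -/
open scoped Pointwise Classical RealInnerProductSpace

noncomputable section

/-- The plane `ℝ²`. -/
abbrev Pt : Type := EuclideanSpace ℝ (Fin 2)

/-- `b_A`: the number of points of `A` on the frontier of the convex hull of `A`. -/
def bdryCard (A : Finset Pt) : ℕ :=
  (A.filter fun x => x ∈ frontier (convexHull ℝ (A : Set Pt))).card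

/-- `i_A`: the number of points of `A` in the interior of the convex hull of `A`. -/
def intCard (A : Finset Pt) : ℕ :=
  (A.filter fun x => x ∈ interior (convexHull ℝ (A : Set Pt))).card

/-- `u` is an exterior normal to the convex hull of `A` at `x`,
i.e. `u·x = max {u·y : y ∈ A}` (for `x ∈ A`). -/
def IsExtNormal (A : Finset Pt) (u x : Pt) : Prop :=
  ∀ y ∈ A, ⟪u, y⟫ ≤ ⟪u, x⟫

/-- `A_u`: the set of points of `A` where `u·x` is maximal. -/
def maxSet (A : Finset Pt) (u : Pt) : Finset Pt :=
  A.filter fun x => ∀ y ∈ A, ⟪u, y⟫ ≤ ⟪u, x⟫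

/-- `C` is an arithmetic progression with difference `d`. -/
def IsAP (C : Finset Pt) (d : Pt) : Prop :=
  ∃ c : Pt, C = (Finset.range C.card).image fun k => c + (k : ℝ) • d

/-- `A_{v,upp}`: points of `A` having a nonzero exterior normal, all of whose
unit exterior normals `u` satisfy `u·v > 0`. -/
def upperSet (A : Finset Pt) (v : Pt) : Finset Pt :=
  A.filter fun a => (∃ u : Pt, u ≠ 0 ∧ IsExtNormal A u a) ∧
    ∀ u : Pt, ‖u‖ = 1 → IsExtNormal A u a → 0 < ⟪u, v⟫

/-- `A_{v,low}`: points of `A` having a nonzero exterior normal, all of whose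
unit exterior normals `u` satisfy `u·v < 0`. -/
def lowerSet (A : Finset Pt) (v : Pt) : Finset Pt :=
  A.filter fun a => (∃ u : Pt, u ≠ 0 ∧ IsExtNormal A u a) ∧
    ∀ u : Pt, ‖u‖ = 1 → IsExtNormal A u a → ⟪u, v⟫ < 0

/-- The unit vector `v` is not parallel to any side of the convex hull of `A`. -/
def NotParallelToSide (v : Pt) (A : Finset Pt) : Prop :=
  ∀ u : Pt, ‖u‖ = 1 → ⟪u, v⟫ = 0 → (maxSet A u).card ≤ 1

/-- For `v = (v₁, v₂)`, the rotated vector `w = (v₂, -v₁)`. -/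
def perp (v : Pt) : Pt := (EuclideanSpace.equiv (Fin 2) ℝ).symm ![v 1, -(v 0)]

/-- `r_{v,A}`: a point of `A` where `(perp v)·x` is maximal (the rightmost point of `A`);
it is unique when `v` is not parallel to any side of the convex hull of `A`. -/
def rPt (v : Pt) (A : Finset Pt) : Pt :=
  if h : ∃ x ∈ A, ∀ y ∈ A, ⟪perp v, y⟫ ≤ ⟪perp v, x⟫ then h.choose else 0

/-- `l_{v,A}`: a point of `A` where `(perp v)·x` is minimal (the leftmost point of `A`);
it is unique when `v` is not parallel to any side of the convex hull of `A`. -/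
def lPt (v : Pt) (A : Finset Pt) : Pt :=
  if h : ∃ x ∈ A, ∀ y ∈ A, ⟪perp v, x⟫ ≤ ⟪perp v, y⟫ then h.choose else 0

/-!
Choose `w` with `⟪w, ·⟫` injective on `A + B` and let `v ⊥ w`. The boundary points of a
non-collinear `X` lie on two arcs, made of the points with an outer normal `v + t • w`,
resp. `-v + t • w`, and the arcs share exactly the two extreme points of `X` in the directions
`±w`; hence `b_X + 2` is the sum of the sizes of the two arcs.

Along an arc, as `t` increases, the maximisers of `⟪v + t • w, ·⟫` on `X` form blocks lying on
lines, consecutive blocks share one point, and the blocks of `A + B` contain the sums of the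
blocks of `A` and `B`. By Cauchy–Davenport a block sum has at least `|P| + |Q| - 1` points, and
gluing the blocks gives `|arc A| + |arc B| ≤ |arc (A + B)| + 1` for each of the two arcs.
-/

open Finset

section Stacked

variable {ι α : Type*} [LinearOrder ι] [LinearOrder α]

structure IsStackedOn (P : ι → Finset α) (T : Finset ι) : Prop where
  nonempty : ∀ t ∈ T, (P t).Nonempty
  le : ∀ s ∈ T, ∀ t ∈ T, s < t → ∀ x ∈ P s, ∀ y ∈ P t, x ≤ y
  inter_nonempty : ∀ s ∈ T, ∀ t ∈ T, s < t → (∀ c ∈ T, c ≤ s ∨ t ≤ c) → (P s ∩ P t).Nonempty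

variable {P Q : ι → Finset α} {T : Finset ι} {t : ι}

theorem IsStackedOn.of_insert_max (hP : IsStackedOn P (insert t T)) (hlt : ∀ s ∈ T, s < t) :
    IsStackedOn P T where
  nonempty s hs := hP.nonempty s (mem_insert_of_mem hs)
  le s hs s' hs' := hP.le s (mem_insert_of_mem hs) s' (mem_insert_of_mem hs')
  inter_nonempty s hs s' hs' hss' hcons := by
    refine hP.inter_nonempty s (mem_insert_of_mem hs) s' (mem_insert_of_mem hs') hss' ?_
    simp only [mem_insert, forall_eq_or_imp]
    exact ⟨Or.inr (hlt s' hs').le, hcons⟩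

theorem IsStackedOn.add_inter_biUnion_subset [Add α] [AddLeftMono α] [AddRightMono α]
    (hP : IsStackedOn P (insert t T)) (hQ : IsStackedOn Q (insert t T)) (hlt : ∀ s ∈ T, s < t)
    {m : ι} (hm : m ∈ T) {p q : α} (hp : p ∈ P m ∩ P t) (hq : q ∈ Q m ∩ Q t) :
    (P t + Q t) ∩ T.biUnion (fun s => P s + Q s) ⊆ {p + q} := by
  intro z hz
  simp only [mem_inter, mem_biUnion, mem_add] at hz hp hq
  obtain ⟨⟨a, ha, b, hb, rfl⟩, s, hs, a', ha', b', hb', hab⟩ := hz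
  have ht := mem_insert_self t T
  refine mem_singleton.2 (le_antisymm ?_ ?_)
  · rw [← hab]
    exact add_le_add (hP.le s (mem_insert_of_mem hs) t ht (hlt s hs) a' ha' p hp.2)
      (hQ.le s (mem_insert_of_mem hs) t ht (hlt s hs) b' hb' q hq.2)
  · exact add_le_add (hP.le m (mem_insert_of_mem hm) t ht (hlt m hm) p hp.1 a ha)
      (hQ.le m (mem_insert_of_mem hm) t ht (hlt m hm) q hq.1 b hb)

theorem IsStackedOn.card_biUnion_add_card_biUnion_le [Add α] [IsCancelAdd α] [AddLeftMono α]
    [AddRightMono α] (hP : IsStackedOn P T) (hQ : IsStackedOn Q T) :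
    #(T.biUnion P) + #(T.biUnion Q) ≤ #(T.biUnion fun t => P t + Q t) + 1 := by
  induction T using Finset.induction_on_max with
  | empty => simp
  | insert t T hlt ih =>
    have ht := mem_insert_self t T
    have hcd :=
      cauchy_davenport_add_of_linearOrder_isCancelAdd (hP.nonempty t ht) (hQ.nonempty t ht)
    simp only [biUnion_insert]
    rcases T.eq_empty_or_nonempty with rfl | hT
    · simp only [biUnion_empty, union_empty]
      omega
    have ih := ih (hP.of_insert_max hlt) (hQ.of_insert_max hlt)
    -- `m` and `t` are consecutive in `insert t T`, so the new blocks overlap the old ones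
    set m := T.max' hT
    have hm : m ∈ T := T.max'_mem hT
    have hcons : ∀ c ∈ insert t T, c ≤ m ∨ t ≤ c := by
      simp only [mem_insert, forall_eq_or_imp, le_refl, or_true, true_and]
      exact fun c hc => Or.inl (T.le_max' c hc)
    obtain ⟨p, hp⟩ := hP.inter_nonempty m (mem_insert_of_mem hm) t ht (hlt m hm) hcons
    obtain ⟨q, hq⟩ := hQ.inter_nonempty m (mem_insert_of_mem hm) t ht (hlt m hm) hcons
    have hPi : 1 ≤ #(P t ∩ T.biUnion P) :=
      card_pos.2 ⟨p, mem_inter.2 ⟨(mem_inter.1 hp).2, mem_biUnion.2 ⟨m, hm, (mem_inter.1 hp).1⟩⟩⟩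
    have hQi : 1 ≤ #(Q t ∩ T.biUnion Q) :=
      card_pos.2 ⟨q, mem_inter.2 ⟨(mem_inter.1 hq).2, mem_biUnion.2 ⟨m, hm, (mem_inter.1 hq).1⟩⟩⟩
    have hSi := card_le_card (hP.add_inter_biUnion_subset hQ hlt hm hp hq)
    rw [card_singleton] at hSi
    have := card_union_add_card_inter (P t) (T.biUnion P)
    have := card_union_add_card_inter (Q t) (T.biUnion Q)
    have := card_union_add_card_inter (P t + Q t) (T.biUnion fun s => P s + Q s)
    omega

end Stacked

section ExtNormal

variable {X A B : Finset Pt} {u u' v w x : Pt}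

theorem mem_maxSet : x ∈ maxSet X u ↔ x ∈ X ∧ IsExtNormal X u x := mem_filter

theorem maxSet_nonempty (hX : X.Nonempty) (u : Pt) : (maxSet X u).Nonempty := by
  obtain ⟨x, hx, hmax⟩ := X.exists_max_image (fun y => ⟪u, y⟫) hX
  exact ⟨x, mem_maxSet.2 ⟨hx, hmax⟩⟩

theorem IsExtNormal.smul (h : IsExtNormal X u x) {c : ℝ} (hc : 0 ≤ c) :
    IsExtNormal X (c • u) x := fun y hy => by
  simp only [real_inner_smul_left]
  exact mul_le_mul_of_nonneg_left (h y hy) hc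

theorem IsExtNormal.add (h : IsExtNormal X u x) (h' : IsExtNormal X u' x) :
    IsExtNormal X (u + u') x := fun y hy => by
  simp only [inner_add_left]
  exact add_le_add (h y hy) (h' y hy)

theorem IsExtNormal.add_add {a b : Pt} (ha : IsExtNormal A u a) (hb : IsExtNormal B u b) :
    IsExtNormal (A + B) u (a + b) := by
  intro z hz
  obtain ⟨a', ha', b', hb', rfl⟩ := mem_add.1 hz
  simp only [inner_add_right]
  exact add_le_add (ha a' ha') (hb b' hb')

theorem IsExtNormal.eq_of_injOn (hinj : Set.InjOn (fun y => ⟪u, y⟫) X) {x' : Pt} (hx : x ∈ X)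
    (hx' : x' ∈ X) (h : IsExtNormal X u x) (h' : IsExtNormal X u x') : x = x' :=
  hinj hx hx' (le_antisymm (h' x hx) (h x' hx'))

theorem IsExtNormal.inner_le_of_lt {x' : Pt} {t t' : ℝ} (hx : x ∈ X) (hx' : x' ∈ X)
    (h : IsExtNormal X (v + t • w) x) (h' : IsExtNormal X (v + t' • w) x') (htt' : t < t') :
    ⟪w, x⟫ ≤ ⟪w, x'⟫ := by
  have h₁ := h x' hx'
  have h₂ := h' x hx
  simp only [inner_add_left, real_inner_smul_left] at h₁ h₂
  nlinarith

theorem IsExtNormal.inner_le_of_mem_convexHull (h : IsExtNormal X u x) {z : Pt}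
    (hz : z ∈ convexHull ℝ (X : Set Pt)) : ⟪u, z⟫ ≤ ⟪u, x⟫ := by
  have hsub : convexHull ℝ (X : Set Pt) ⊆ {z | ⟪u, z⟫ ≤ ⟪u, x⟫} :=
    convexHull_min (fun y hy => h y hy)
      (convex_halfSpace_le ⟨inner_add_right u, fun c y => real_inner_smul_right u y c⟩ _)
  exact hsub hz

theorem exists_isExtNormal_add_smul (hmax : ∀ y ∈ X, y ≠ x → ⟪w, y⟫ < ⟪w, x⟫) (v : Pt) :
    ∃ t : ℝ, IsExtNormal X (v + t • w) x := by
  suffices ∀ᶠ t in Filter.atTop, IsExtNormal X (v + t • w) x from this.exists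
  refine (Filter.eventually_all_finset X).2 fun y hy => ?_
  rcases eq_or_ne y x with rfl | hyx
  · exact Filter.Eventually.of_forall fun _ => le_rfl
  have hd : 0 < ⟪w, x⟫ - ⟪w, y⟫ := sub_pos.2 (hmax y hy hyx)
  filter_upwards [Filter.eventually_ge_atTop ((⟪v, y⟫ - ⟪v, x⟫) / (⟪w, x⟫ - ⟪w, y⟫))] with t ht
  rw [div_le_iff₀ hd] at ht
  simp only [inner_add_left, real_inner_smul_left]
  linarith

end ExtNormal

section HalfBoundary

variable {X A B : Finset Pt} {v w x : Pt} {T : Finset ℝ}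

/-- For `v ⊥ w`, the arc of the boundary of `X` running from its extreme point in direction `-w`
to the one in direction `w` through the side `v` points to. -/
def halfBoundary (X : Finset Pt) (v w : Pt) : Finset Pt :=
  X.filter fun x => ∃ t : ℝ, IsExtNormal X (v + t • w) x

theorem mem_halfBoundary : x ∈ halfBoundary X v w ↔ x ∈ X ∧ ∃ t : ℝ, IsExtNormal X (v + t • w) x :=
  mem_filter

theorem halfBoundary_subset : halfBoundary X v w ⊆ X := filter_subset _ _

/-- The parameters `ρ` solving `⟪v + ρ • w, p⟫ = ⟪v + ρ • w, q⟫` for points `p, q` of `X`. -/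
def tieParams (X : Finset Pt) (v w : Pt) : Finset ℝ :=
  ((X ×ˢ X).filter fun pq => ⟪w, pq.1⟫ ≠ ⟪w, pq.2⟫).image
    fun pq => (⟪v, pq.2⟫ - ⟪v, pq.1⟫) / (⟪w, pq.1⟫ - ⟪w, pq.2⟫)

theorem mem_tieParams {p q : Pt} {ρ : ℝ} (hp : p ∈ X) (hq : q ∈ X) (hpq : ⟪w, p⟫ ≠ ⟪w, q⟫)
    (h : ⟪v + ρ • w, p⟫ = ⟪v + ρ • w, q⟫) : ρ ∈ tieParams X v w := by
  refine mem_image.2 ⟨(p, q), mem_filter.2 ⟨mem_product.2 ⟨hp, hq⟩, hpq⟩, ?_⟩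
  simp only [inner_add_left, real_inner_smul_left] at h
  rw [div_eq_iff (sub_ne_zero.2 hpq)]
  linarith

theorem IsExtNormal.of_tieParams (hinj : Set.InjOn (fun y => ⟪w, y⟫) X) (hx : x ∈ X) {s c : ℝ}
    (hfree : ∀ ρ ∈ tieParams X v w, ρ ∈ Set.uIcc c s → ρ = c)
    (hs : IsExtNormal X (v + s • w) x) : IsExtNormal X (v + c • w) x := by
  intro y hy
  by_contra! hlt
  set G : ℝ → ℝ := fun ρ => ⟪v + ρ • w, x⟫ - ⟪v + ρ • w, y⟫
  have hG : Continuous G := by fun_prop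
  obtain ⟨ρ, hρ, hGρ⟩ : ∃ ρ ∈ Set.uIcc c s, G ρ = 0 :=
    intermediate_value_uIcc hG.continuousOn
      (Set.mem_uIcc.2 (Or.inl ⟨(sub_neg.2 hlt).le, sub_nonneg.2 (hs y hy)⟩))
  have hyx : y ≠ x := by rintro rfl; exact lt_irrefl _ hlt
  have hρc := hfree ρ (mem_tieParams hy hx (fun h => hyx (hinj hy hx h))
    (sub_eq_zero.1 hGρ).symm) hρ
  subst hρc
  exact lt_irrefl _ (hGρ ▸ sub_neg.2 hlt)

theorem isStackedOn_maxSet (hX : X.Nonempty) (hinj : Set.InjOn (fun y => ⟪w, y⟫) X)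
    (hT : tieParams X v w ⊆ T) :
    IsStackedOn (fun t => (maxSet X (v + t • w)).image fun y => ⟪w, y⟫) T where
  nonempty t _ := (maxSet_nonempty hX _).image _
  le s _ t _ hst := by
    simp only [forall_mem_image, mem_maxSet]
    rintro x ⟨hx, hxs⟩ y ⟨hy, hyt⟩
    exact hxs.inner_le_of_lt hx hy hyt hst
  inter_nonempty s _ t _ hst hcons := by
    obtain ⟨x, hx⟩ := maxSet_nonempty hX (v + ((s + t) / 2) • w)
    rw [mem_maxSet] at hx
    have hfree : ∀ c, c = s ∨ c = t →
        ∀ ρ ∈ tieParams X v w, ρ ∈ Set.uIcc c ((s + t) / 2) → ρ = c := by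
      rintro c (rfl | rfl) ρ hρ hρc <;> rcases hcons ρ (hT hρ) with h | h
      · rw [Set.uIcc_of_le (by linarith)] at hρc; exact le_antisymm h hρc.1
      · rw [Set.uIcc_of_le (by linarith)] at hρc; linarith [hρc.2]
      · rw [Set.uIcc_of_ge (by linarith)] at hρc; linarith [hρc.1]
      · rw [Set.uIcc_of_ge (by linarith)] at hρc; exact le_antisymm hρc.2 h
    refine ⟨⟪w, x⟫, mem_inter.2 ⟨mem_image_of_mem _ (mem_maxSet.2 ⟨hx.1, ?_⟩),
      mem_image_of_mem _ (mem_maxSet.2 ⟨hx.1, ?_⟩)⟩⟩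
    · exact hx.2.of_tieParams hinj hx.1 (hfree s (Or.inl rfl))
    · exact hx.2.of_tieParams hinj hx.1 (hfree t (Or.inr rfl))

theorem halfBoundary_eq_biUnion (hinj : Set.InjOn (fun y => ⟪w, y⟫) X)
    (hT : tieParams X v w ⊆ T) (hT₀ : T.Nonempty) :
    halfBoundary X v w = T.biUnion fun t => maxSet X (v + t • w) := by
  ext x
  simp only [mem_halfBoundary, mem_biUnion, mem_maxSet]
  constructor
  · rintro ⟨hx, t, ht⟩
    -- the parameter of `T` nearest to `t` leaves no tie strictly between it and `t`
    obtain ⟨c, hc, hmin⟩ := T.exists_min_image (fun c => |c - t|) hT₀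
    refine ⟨c, hc, hx, ht.of_tieParams hinj hx fun ρ hρ hρc => ?_⟩
    have := hmin ρ (hT hρ)
    rcases le_total c t with hct | hct
    · rw [Set.uIcc_of_le hct] at hρc
      rw [abs_of_nonpos (by linarith), abs_of_nonpos (by linarith [hρc.2])] at this
      linarith [hρc.1]
    · rw [Set.uIcc_of_ge hct] at hρc
      rw [abs_of_nonneg (by linarith), abs_of_nonneg (by linarith [hρc.1])] at this
      linarith [hρc.2]
  · rintro ⟨c, -, hx, hc⟩
    exact ⟨hx, c, hc⟩

theorem maxSet_add_subset_halfBoundary (t : ℝ) :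
    maxSet A (v + t • w) + maxSet B (v + t • w) ⊆ halfBoundary (A + B) v w := by
  intro z hz
  obtain ⟨a, ha, b, hb, rfl⟩ := mem_add.1 hz
  rw [mem_maxSet] at ha hb
  exact mem_halfBoundary.2 ⟨add_mem_add ha.1 hb.1, t, ha.2.add_add hb.2⟩

theorem card_halfBoundary_add_le (hA : A.Nonempty) (hB : B.Nonempty)
    (hinjA : Set.InjOn (fun y => ⟪w, y⟫) A) (hinjB : Set.InjOn (fun y => ⟪w, y⟫) B) :
    #(halfBoundary A v w) + #(halfBoundary B v w) ≤ #(halfBoundary (A + B) v w) + 1 := by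
  set f : Pt → ℝ := fun y => ⟪w, y⟫
  set T := insert 0 (tieParams A v w ∪ tieParams B v w)
  have hTA : tieParams A v w ⊆ T := subset_union_left.trans (subset_insert _ _)
  have hTB : tieParams B v w ⊆ T := subset_union_right.trans (subset_insert _ _)
  have hcard {X : Finset Pt} (hinj : Set.InjOn f X) (hT : tieParams X v w ⊆ T) :
      #(halfBoundary X v w) = #(T.biUnion fun t => (maxSet X (v + t • w)).image f) := by
    rw [← biUnion_image, ← halfBoundary_eq_biUnion hinj hT (insert_nonempty _ _),
      (card_image_of_injOn (hinj.mono halfBoundary_subset)).symm]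
  have hsum : (T.biUnion fun t => (maxSet A (v + t • w)).image f + (maxSet B (v + t • w)).image f)
      ⊆ (halfBoundary (A + B) v w).image f := by
    refine biUnion_subset.2 fun t _ z hz => ?_
    obtain ⟨_, hfa, _, hfb, rfl⟩ := mem_add.1 hz
    obtain ⟨a, ha, rfl⟩ := mem_image.1 hfa
    obtain ⟨b, hb, rfl⟩ := mem_image.1 hfb
    exact mem_image.2
      ⟨a + b, maxSet_add_subset_halfBoundary t (add_mem_add ha hb), inner_add_right w a b⟩
  calc #(halfBoundary A v w) + #(halfBoundary B v w)
      ≤ #(T.biUnion fun t => (maxSet A (v + t • w)).image f + (maxSet B (v + t • w)).image f)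
          + 1 := by
        rw [hcard hinjA hTA, hcard hinjB hTB]
        exact (isStackedOn_maxSet hA hinjA hTA).card_biUnion_add_card_biUnion_le
          (isStackedOn_maxSet hB hinjB hTB)
    _ ≤ #(halfBoundary (A + B) v w) + 1 := by
        gcongr
        exact (card_le_card hsum).trans card_image_le

end HalfBoundary

section Frontier

variable {X : Finset Pt} {u x : Pt}

theorem collinear_of_vectorSpan_ne_top {s : Set Pt} (h : vectorSpan ℝ s ≠ ⊤) :
    Collinear ℝ s := by
  have := Submodule.finrank_lt h
  rw [finrank_euclideanSpace_fin] at this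
  exact collinear_iff_finrank_le_one.2 (by omega)

theorem collinear_of_forall_inner_eq {s : Set Pt} {n : Pt} (hn : n ≠ 0)
    (h : ∀ p ∈ s, ∀ q ∈ s, ⟪n, p⟫ = ⟪n, q⟫) : Collinear ℝ s := by
  refine collinear_of_vectorSpan_ne_top fun htop => hn ?_
  have hle : vectorSpan ℝ s ≤ (ℝ ∙ n)ᗮ := by
    rw [vectorSpan_def, Submodule.span_le]
    rintro _ ⟨p, hp, q, hq, rfl⟩
    rw [SetLike.mem_coe, Submodule.mem_orthogonal_singleton_iff_inner_right]
    simp only [vsub_eq_sub, inner_sub_right, h p hp q hq, sub_self]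
  have hn' : n ∈ (ℝ ∙ n)ᗮ := hle (htop ▸ Submodule.mem_top)
  rwa [Submodule.mem_orthogonal_singleton_iff_inner_right, inner_self_eq_zero] at hn'

theorem nonempty_of_not_collinear (hX : ¬Collinear ℝ (X : Set Pt)) : X.Nonempty :=
  Finset.nonempty_iff_ne_empty.2 fun h => hX (by simp [h, collinear_empty])

theorem interior_convexHull_nonempty (hX : ¬Collinear ℝ (X : Set Pt)) :
    (interior (convexHull ℝ (X : Set Pt))).Nonempty := by
  rw [interior_convexHull_nonempty_iff_affineSpan_eq_top,
    AffineSubspace.affineSpan_eq_top_iff_vectorSpan_eq_top_of_nonempty ℝ Pt Pt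
      (nonempty_of_not_collinear hX).to_set]
  by_contra h
  exact hX (collinear_of_vectorSpan_ne_top h)

theorem mem_frontier_convexHull_of_isExtNormal (hx : x ∈ X) (hu : u ≠ 0)
    (h : IsExtNormal X u x) : x ∈ frontier (convexHull ℝ (X : Set Pt)) := by
  refine ⟨subset_closure (subset_convexHull ℝ _ hx), fun hint => hu ?_⟩
  -- an interior maximum of the linear functional `⟪u, ·⟫` forces it to vanish
  have hmax : IsLocalMax (fun z => ⟪u, z⟫) x :=
    Filter.mem_of_superset (isOpen_interior.mem_nhds hint) fun z hz =>
      h.inner_le_of_mem_convexHull (interior_subset hz)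
  have h0 := hmax.hasFDerivAt_eq_zero (innerSL ℝ u).hasFDerivAt
  simpa using congrArg (fun f => f u) h0

theorem exists_isExtNormal_of_mem_frontier (hX : ¬Collinear ℝ (X : Set Pt))
    (hx : x ∈ frontier (convexHull ℝ (X : Set Pt))) : ∃ u ≠ 0, IsExtNormal X u x := by
  obtain ⟨f, hf, hmax⟩ := geometric_hahn_banach_of_nonempty_interior_point
    (convex_convexHull ℝ _) hx.2 (interior_convexHull_nonempty hX)
  refine ⟨(InnerProductSpace.toDual ℝ Pt).symm f, by simpa using hf, fun y hy => ?_⟩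
  simp only [InnerProductSpace.toDual_symm_apply]
  exact hmax y (subset_convexHull ℝ _ hy)

end Frontier

section Decomposition

variable {X : Finset Pt} {u v w x : Pt}

theorem exists_eq_smul_add_smul (hv : v ≠ 0) (hw : w ≠ 0) (hvw : ⟪v, w⟫ = 0) (u : Pt) :
    ∃ α β : ℝ, u = α • v + β • w := by
  have hli : LinearIndependent ℝ ![v, w] := by
    refine linearIndependent_of_ne_zero_of_inner_eq_zero (fun i => by fin_cases i <;> simpa) ?_
    intro i j hij
    fin_cases i <;> fin_cases j <;> simp_all [real_inner_comm]
  have hspan := hli.span_eq_top_of_card_eq_finrank' (by simp)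
  rw [Matrix.range_cons, Matrix.range_cons, Matrix.range_empty, Set.union_empty,
    Set.union_singleton, Set.pair_comm] at hspan
  obtain ⟨α, β, h⟩ := Submodule.mem_span_pair.1 (hspan ▸ Submodule.mem_top (x := u))
  exact ⟨α, β, h.symm⟩

theorem add_smul_ne_zero (hv : v ≠ 0) (hvw : ⟪v, w⟫ = 0) (t : ℝ) : v + t • w ≠ 0 := by
  intro h
  have := congrArg (fun z => ⟪v, z⟫) h
  simp only [inner_add_right, real_inner_smul_right, hvw, mul_zero, add_zero, inner_zero_right,
    inner_self_eq_zero] at this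
  exact hv this

theorem Set.InjOn.inner_neg {s : Set Pt} (hinj : Set.InjOn (fun y => ⟪w, y⟫) s) :
    Set.InjOn (fun y => ⟪-w, y⟫) s := fun a ha b hb h =>
  hinj ha hb (by simpa only [inner_neg_left, neg_inj] using h)

theorem IsExtNormal.inner_lt (hinj : Set.InjOn (fun y => ⟪u, y⟫) X) (hx : x ∈ X)
    (h : IsExtNormal X u x) : ∀ y ∈ X, y ≠ x → ⟪u, y⟫ < ⟪u, x⟫ := fun y hy hyx =>
  (h y hy).lt_of_ne fun e => hyx (hinj hy hx e)

theorem mem_halfBoundary_of_isExtNormal (hinj : Set.InjOn (fun y => ⟪w, y⟫) X) (hx : x ∈ X)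
    (h : IsExtNormal X w x ∨ IsExtNormal X (-w) x) : x ∈ halfBoundary X v w := by
  refine mem_halfBoundary.2 ⟨hx, ?_⟩
  rcases h with h | h
  · exact exists_isExtNormal_add_smul (h.inner_lt hinj hx) v
  · obtain ⟨t, ht⟩ := exists_isExtNormal_add_smul (h.inner_lt hinj.inner_neg hx) v
    exact ⟨-t, by rwa [neg_smul, ← smul_neg]⟩

theorem mem_halfBoundary_union (hv : v ≠ 0) (hw : w ≠ 0) (hvw : ⟪v, w⟫ = 0)
    (hinj : Set.InjOn (fun y => ⟪w, y⟫) X) (hx : x ∈ X) (hu : u ≠ 0) (h : IsExtNormal X u x) :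
    x ∈ halfBoundary X v w ∪ halfBoundary X (-v) w := by
  obtain ⟨α, β, rfl⟩ := exists_eq_smul_add_smul hv hw hvw u
  rcases lt_trichotomy α 0 with hα | rfl | hα
  · refine mem_union_right _ (mem_halfBoundary.2 ⟨hx, β / -α, ?_⟩)
    convert h.smul (inv_nonneg.2 (neg_nonneg.2 hα.le)) using 1
    match_scalars <;> field_simp [hα.ne]
  · rw [zero_smul, zero_add] at h hu
    refine mem_union_left _ (mem_halfBoundary_of_isExtNormal hinj hx ?_)
    rcases (left_ne_zero_of_smul hu).lt_or_gt with hβ | hβ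
    · right
      convert h.smul (inv_nonneg.2 (neg_nonneg.2 hβ.le)) using 1
      match_scalars; field_simp [hβ.ne]
    · left
      convert h.smul (inv_nonneg.2 hβ.le) using 1
      match_scalars; field_simp
  · refine mem_union_left _ (mem_halfBoundary.2 ⟨hx, β / α, ?_⟩)
    convert h.smul (inv_nonneg.2 hα.le) using 1
    match_scalars <;> field_simp

end Decomposition

section BoundaryCount

variable {X : Finset Pt} {v w : Pt}

theorem filter_mem_frontier_eq_union (hX : ¬Collinear ℝ (X : Set Pt)) (hv : v ≠ 0) (hw : w ≠ 0)
    (hvw : ⟪v, w⟫ = 0) (hinj : Set.InjOn (fun y => ⟪w, y⟫) X) :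
    X.filter (· ∈ frontier (convexHull ℝ (X : Set Pt))) =
      halfBoundary X v w ∪ halfBoundary X (-v) w := by
  ext x
  rw [mem_filter]
  constructor
  · rintro ⟨hx, hfr⟩
    obtain ⟨u, hu, h⟩ := exists_isExtNormal_of_mem_frontier hX hfr
    exact mem_halfBoundary_union hv hw hvw hinj hx hu h
  · have hvw' : ⟪-v, w⟫ = 0 := by rw [inner_neg_left, hvw, neg_zero]
    rw [mem_union]
    rintro (hx | hx) <;> obtain ⟨hx, t, ht⟩ := mem_halfBoundary.1 hx
    · exact ⟨hx, mem_frontier_convexHull_of_isExtNormal hx (add_smul_ne_zero hv hvw t) ht⟩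
    · exact ⟨hx, mem_frontier_convexHull_of_isExtNormal hx
        (add_smul_ne_zero (neg_ne_zero.2 hv) hvw' t) ht⟩

theorem halfBoundary_inter_neg (hX : ¬Collinear ℝ (X : Set Pt)) (hv : v ≠ 0) (hvw : ⟪v, w⟫ = 0)
    (hinj : Set.InjOn (fun y => ⟪w, y⟫) X) :
    halfBoundary X v w ∩ halfBoundary X (-v) w = maxSet X w ∪ maxSet X (-w) := by
  ext x
  simp only [mem_inter, mem_union, mem_maxSet]
  constructor
  · rintro ⟨hx₁, hx₂⟩
    obtain ⟨hx, t₁, h₁⟩ := mem_halfBoundary.1 hx₁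
    obtain ⟨-, t₂, h₂⟩ := mem_halfBoundary.1 hx₂
    have hsum : v + t₁ • w + (-v + t₂ • w) = (t₁ + t₂) • w := by module
    have h₁₂ := hsum ▸ h₁.add h₂
    rcases lt_trichotomy (t₁ + t₂) 0 with ht | ht | ht
    · refine Or.inr ⟨hx, ?_⟩
      convert h₁₂.smul (inv_nonneg.2 (neg_nonneg.2 ht.le)) using 1
      match_scalars; field_simp [ht.ne]
    · -- opposite normals at `x` would put `X` on a line
      refine absurd (collinear_of_forall_inner_eq (add_smul_ne_zero hv hvw t₁) ?_) hX
      have h₂' : IsExtNormal X (-(v + t₁ • w)) x := by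
        convert h₂ using 1
        rw [show t₂ = -t₁ by linarith]
        module
      intro p hp q hq
      have hp' := h₂' p hp
      have hq' := h₂' q hq
      simp only [inner_neg_left, neg_le_neg_iff] at hp' hq'
      linarith [h₁ p hp, h₁ q hq]
    · refine Or.inl ⟨hx, ?_⟩
      convert h₁₂.smul (inv_nonneg.2 ht.le) using 1
      match_scalars; field_simp
  · rintro (⟨hx, h⟩ | ⟨hx, h⟩)
    · exact ⟨mem_halfBoundary_of_isExtNormal hinj hx (Or.inl h),
        mem_halfBoundary_of_isExtNormal hinj hx (Or.inl h)⟩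
    · exact ⟨mem_halfBoundary_of_isExtNormal hinj hx (Or.inr h),
        mem_halfBoundary_of_isExtNormal hinj hx (Or.inr h)⟩

theorem card_maxSet_eq_one {u : Pt} (hX : X.Nonempty) (hinj : Set.InjOn (fun y => ⟪u, y⟫) X) :
    #(maxSet X u) = 1 := by
  refine le_antisymm (card_le_one.2 fun x hx y hy => ?_) (maxSet_nonempty hX u).card_pos
  rw [mem_maxSet] at hx hy
  exact hx.2.eq_of_injOn hinj hx.1 hy.1 hy.2

theorem card_maxSet_union_neg (hX : ¬Collinear ℝ (X : Set Pt)) (hw : w ≠ 0)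
    (hinj : Set.InjOn (fun y => ⟪w, y⟫) X) : #(maxSet X w ∪ maxSet X (-w)) = 2 := by
  have hne := nonempty_of_not_collinear hX
  rw [card_union_of_disjoint, card_maxSet_eq_one hne hinj, card_maxSet_eq_one hne hinj.inner_neg]
  refine disjoint_left.2 fun x hx hx' => hX (collinear_of_forall_inner_eq hw ?_)
  rw [mem_maxSet] at hx hx'
  intro p hp q hq
  have hp' := hx'.2 p hp
  have hq' := hx'.2 q hq
  simp only [inner_neg_left, neg_le_neg_iff] at hp' hq'
  linarith [hx.2 p hp, hx.2 q hq]

theorem bdryCard_add_two (hX : ¬Collinear ℝ (X : Set Pt)) (hv : v ≠ 0) (hw : w ≠ 0)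
    (hvw : ⟪v, w⟫ = 0) (hinj : Set.InjOn (fun y => ⟪w, y⟫) X) :
    bdryCard X + 2 = #(halfBoundary X v w) + #(halfBoundary X (-v) w) := by
  rw [bdryCard, filter_mem_frontier_eq_union hX hv hw hvw hinj, ← card_union_add_card_inter,
    halfBoundary_inter_neg hX hv hvw hinj, card_maxSet_union_neg hX hw hinj]

end BoundaryCount

section Sumset

variable {A B : Finset Pt} {w : Pt}

theorem exists_injOn_inner {E : Type*} [NormedAddCommGroup E] [InnerProductSpace ℝ E]
    (X : Finset E) : ∃ w : E, Set.InjOn (fun y => ⟪w, y⟫) X := by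
  let D := (X ×ˢ X).filter fun pq => pq.1 ≠ pq.2
  obtain ⟨w, hw⟩ := Submodule.exists_forall_notMem_of_forall_ne_top
    (fun pq : D => (ℝ ∙ (pq.1.1 - pq.1.2))ᗮ) fun ⟨pq, hpq⟩ htop => by
      have hd : pq.1 - pq.2 ∈ (ℝ ∙ (pq.1 - pq.2))ᗮ := htop ▸ Submodule.mem_top
      rw [Submodule.mem_orthogonal_singleton_iff_inner_right, inner_self_eq_zero, sub_eq_zero]
        at hd
      exact (mem_filter.1 hpq).2 hd
  refine ⟨w, fun p hp q hq hpq => ?_⟩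
  by_contra hne
  apply hw ⟨(p, q), mem_filter.2 ⟨mem_product.2 ⟨hp, hq⟩, hne⟩⟩
  rw [Submodule.mem_orthogonal_singleton_iff_inner_right, real_inner_comm, inner_sub_right,
    sub_eq_zero]
  exact hpq

theorem Set.InjOn.inner_of_add_right (hinj : Set.InjOn (fun y => ⟪w, y⟫) ↑(A + B)) {b : Pt}
    (hb : b ∈ B) : Set.InjOn (fun y => ⟪w, y⟫) A := fun p hp q hq hpq =>
  add_right_cancel (hinj (Finset.add_mem_add hp hb) (Finset.add_mem_add hq hb) (by
    simp only [inner_add_right] at hpq ⊢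
    rw [hpq]))

theorem not_collinear_add (hA : ¬Collinear ℝ (A : Set Pt)) {b : Pt} (hb : b ∈ B) :
    ¬Collinear ℝ ((A + B : Finset Pt) : Set Pt) := fun h => hA <| by
  have hsub : b +ᵥ (A : Set Pt) ⊆ ((A + B : Finset Pt) : Set Pt) := by
    rintro _ ⟨a, ha, rfl⟩
    show b + a ∈ A + B
    rw [add_comm b a]
    exact Finset.add_mem_add (mem_coe.1 ha) hb
  have := h.subset hsub
  rwa [Collinear, vectorSpan_vadd] at this

theorem ne_zero_of_injOn_inner (hA : ¬Collinear ℝ (A : Set Pt))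
    (hinj : Set.InjOn (fun y => ⟪w, y⟫) A) : w ≠ 0 := by
  rintro rfl
  obtain ⟨a, ha⟩ := nonempty_of_not_collinear hA
  refine hA ((collinear_singleton ℝ a).subset fun p hp => ?_)
  exact hinj hp ha (by simp only [inner_zero_left])

theorem perp_apply_zero (w : Pt) : perp w 0 = w 1 := rfl

theorem perp_apply_one (w : Pt) : perp w 1 = -w 0 := rfl

theorem inner_perp_self (w : Pt) : ⟪perp w, w⟫ = 0 := by
  simp only [PiLp.inner_apply, Fin.sum_univ_two, perp_apply_zero, perp_apply_one,
    RCLike.inner_apply, conj_trivial]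
  ring

theorem perp_ne_zero (hw : w ≠ 0) : perp w ≠ 0 := fun h => hw <| by
  have h₀ : w 1 = 0 := by simpa only [perp_apply_zero, PiLp.zero_apply] using congrArg (· 0) h
  have h₁ : w 0 = 0 := by
    simpa only [perp_apply_one, PiLp.zero_apply, neg_eq_zero] using congrArg (· 1) h
  ext i
  fin_cases i <;> assumption

end Sumset

theorem bdry_sum_ge
    (A B : Finset Pt) (hA : ¬ Collinear ℝ (A : Set Pt)) (hB : ¬ Collinear ℝ (B : Set Pt)) :
    bdryCard (A + B) ≥ bdryCard A + bdryCard B := by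
  obtain ⟨a, ha⟩ := nonempty_of_not_collinear hA
  obtain ⟨b, hb⟩ := nonempty_of_not_collinear hB
  obtain ⟨w, hinj⟩ := exists_injOn_inner (A + B)
  have hinjA := hinj.inner_of_add_right hb
  have hinjB := (add_comm A B ▸ hinj).inner_of_add_right ha
  have hw := ne_zero_of_injOn_inner hA hinjA
  have hv := perp_ne_zero hw
  have hA₂ := bdryCard_add_two hA hv hw (inner_perp_self w) hinjA
  have hB₂ := bdryCard_add_two hB hv hw (inner_perp_self w) hinjB
  have hAB₂ := bdryCard_add_two (not_collinear_add hA hb) hv hw (inner_perp_self w) hinj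
  have hup := card_halfBoundary_add_le (v := perp w) ⟨a, ha⟩ ⟨b, hb⟩ hinjA hinjB
  have hdown := card_halfBoundary_add_le (v := -perp w) ⟨a, ha⟩ ⟨b, hb⟩ hinjA hinjB
  omega
end
end

section
/- Let A and B be finite non-collinear subsets of ℝ² such that every point of A + B has a unique representation, i.e., whenever a₁ + b₁ = a₂ + b₂ with a₁, a₂ ∈ A and b₁, b₂ ∈ B, one has a₁ = a₂ and b₁ = b₂. Then √(2 i_{A+B} + b_{A+B} − 2) ≥ √(2 i_A + b_A − 2) + √(2 i_B + b_B − 2). -/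
open scoped Pointwise Classical RealInnerProductSpace

noncomputable section

/-! Every point of a finite set `C` lies either in the interior or on the frontier of `[C]`, so
`2 i_C + b_C - 2 = 2 |C| - b_C - 2`. Unique representation gives `|A + B| = |A| |B|`, and since
`[A + B] = [A] + [B]`, a point `a + b` on the frontier of `[A + B]` has `a` and `b` on the frontiers
of `[A]` and `[B]`, whence `b_{A+B} ≤ b_A b_B`. With `2 ≤ b_A ≤ |A|` and `2 ≤ b_B ≤ |B|` this gives
`tr(A + B) ≥ 2 tr(A) + 2 tr(B) ≥ (√tr(A) + √tr(B))²`. -/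

theorem mem_frontier_convexHull_of_forall_inner_le {E : Type*} [NormedAddCommGroup E]
    [InnerProductSpace ℝ E] {s : Set E} {x u : E} (hx : x ∈ s)
    (hu : u ≠ 0) (hmax : ∀ y ∈ s, ⟪u, y⟫ ≤ ⟪u, x⟫) : x ∈ frontier (convexHull ℝ s) := by
  refine ⟨subset_closure (subset_convexHull ℝ s hx), fun hint => hu ?_⟩
  have hhull : convexHull ℝ s ⊆ {y | ⟪u, y⟫ ≤ ⟪u, x⟫} :=
    convexHull_min hmax (convex_halfSpace_le (innerₛₗ ℝ u).isLinear _)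
  -- A linear functional attaining a local maximum has zero derivative, i.e. vanishes.
  have hlocal : IsLocalMax (fun y => ⟪u, y⟫) x :=
    Filter.mem_of_superset (mem_interior_iff_mem_nhds.mp hint) hhull
  have hzero := hlocal.hasFDerivAt_eq_zero (innerSL ℝ u).hasFDerivAt
  simpa using congrArg (fun f => f u) hzero

theorem mem_frontier_of_add_mem_frontier_add {G : Type*} [TopologicalSpace G] [AddGroup G]
    [IsTopologicalAddGroup G] {s t : Set G} {a b : G} (ha : a ∈ s) (hb : b ∈ t)
    (hab : a + b ∈ frontier (s + t)) : a ∈ frontier s ∧ b ∈ frontier t :=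
  ⟨⟨subset_closure ha, fun hai => hab.2 (subset_interior_add_left (Set.add_mem_add hai hb))⟩,
    ⟨subset_closure hb, fun hbi => hab.2 (subset_interior_add_right (Set.add_mem_add ha hbi))⟩⟩

theorem intCard_add_bdryCard (C : Finset Pt) : intCard C + bdryCard C = C.card := by
  rw [intCard, bdryCard, ← Finset.card_filter_add_card_filter_not (s := C)
    (fun x => x ∈ interior (convexHull ℝ (C : Set Pt)))]
  congr 2
  refine Finset.filter_congr fun x hx => ?_
  rw [frontier, Set.mem_sdiff]
  exact and_iff_right (subset_closure (subset_convexHull ℝ _ hx))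

theorem two_mul_intCard_add_bdryCard_sub_two (C : Finset Pt) :
    2 * (intCard C : ℝ) + bdryCard C - 2 = 2 * C.card - bdryCard C - 2 := by
  rw [← intCard_add_bdryCard C]
  push_cast
  ring

theorem bdryCard_le_card (C : Finset Pt) : bdryCard C ≤ C.card :=
  Finset.card_filter_le _ _

theorem two_le_bdryCard_of_one_lt_card {C : Finset Pt} (hC : 1 < C.card) : 2 ≤ bdryCard C := by
  obtain ⟨x, hx, y, hy, hxy⟩ := Finset.one_lt_card.mp hC
  have hu : x - y ≠ 0 := sub_ne_zero.mpr hxy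
  obtain ⟨p, hp, hpmax⟩ := C.exists_max_image (fun z => ⟪x - y, z⟫) ⟨x, hx⟩
  obtain ⟨q, hq, hqmin⟩ := C.exists_min_image (fun z => ⟪x - y, z⟫) ⟨x, hx⟩
  have hpq : p ≠ q := by
    rintro rfl
    have hlt : ⟪x - y, y⟫ < ⟪x - y, x⟫ := by
      rw [← sub_pos, ← inner_sub_right]
      exact real_inner_self_pos.mpr hu
    linarith [hpmax x hx, hqmin y hy]
  have hpf : p ∈ frontier (convexHull ℝ (C : Set Pt)) :=
    mem_frontier_convexHull_of_forall_inner_le hp hu hpmax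
  have hqf : q ∈ frontier (convexHull ℝ (C : Set Pt)) :=
    mem_frontier_convexHull_of_forall_inner_le hq (neg_ne_zero.mpr hu)
      fun z hz => by simpa only [inner_neg_left, neg_le_neg_iff] using hqmin z hz
  exact Finset.one_lt_card.mpr
    ⟨p, Finset.mem_filter.mpr ⟨hp, hpf⟩, q, Finset.mem_filter.mpr ⟨hq, hqf⟩, hpq⟩

theorem one_lt_card_of_not_collinear {C : Finset Pt} (hC : ¬ Collinear ℝ (C : Set Pt)) :
    1 < C.card := by
  by_contra! hle
  obtain h | ⟨x, hx⟩ := (Finset.card_le_one_iff_subsingleton.mp hle).eq_empty_or_singleton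
  · exact hC (h ▸ collinear_empty ℝ Pt)
  · exact hC (hx ▸ collinear_singleton ℝ x)

theorem bdryCard_add_le (A B : Finset Pt) : bdryCard (A + B) ≤ bdryCard A * bdryCard B := by
  refine (Finset.card_le_card fun c hc => ?_).trans Finset.card_add_le
  obtain ⟨hc, hcf⟩ := Finset.mem_filter.mp hc
  obtain ⟨a, ha, b, hb, rfl⟩ := Finset.mem_add.mp hc
  rw [Finset.coe_add, convexHull_add] at hcf
  obtain ⟨haf, hbf⟩ := mem_frontier_of_add_mem_frontier_add
    (subset_convexHull ℝ _ (Finset.mem_coe.mpr ha))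
    (subset_convexHull ℝ _ (Finset.mem_coe.mpr hb)) hcf
  exact Finset.add_mem_add (Finset.mem_filter.mpr ⟨ha, haf⟩) (Finset.mem_filter.mpr ⟨hb, hbf⟩)

theorem Real.sqrt_add_sqrt_le_sqrt_of_two_mul_add_le {x y z : ℝ} (hx : 0 ≤ x) (hy : 0 ≤ y)
    (hz : 2 * x + 2 * y ≤ z) : √x + √y ≤ √z := by
  rw [← Real.sqrt_sq (by positivity : 0 ≤ √x + √y)]
  refine Real.sqrt_le_sqrt ?_
  nlinarith [sq_nonneg (√x - √y), Real.sq_sqrt hx, Real.sq_sqrt hy]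

theorem two_mul_add_two_mul_le_two_mul_mul_sub {m n a b β : ℝ} (ha : 2 ≤ a) (ham : a ≤ m)
    (hb : 2 ≤ b) (hbn : b ≤ n) (hβ : β ≤ a * b) :
    2 * (2 * m - a - 2) + 2 * (2 * n - b - 2) ≤ 2 * (m * n) - β - 2 := by
  -- The slack is `(a-2)(b-2) + 2(m-a)(b-2) + 2(n-b)(a-2) + 2(m-a)(n-b) + 2 + (ab - β)`.
  nlinarith [mul_nonneg (sub_nonneg.mpr ha) (sub_nonneg.mpr hb),
    mul_nonneg (sub_nonneg.mpr ham) (sub_nonneg.mpr hb),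
    mul_nonneg (sub_nonneg.mpr hbn) (sub_nonneg.mpr ha),
    mul_nonneg (sub_nonneg.mpr ham) (sub_nonneg.mpr hbn)]

theorem sqrt_tr_unique_representation
    (A B : Finset Pt) (hA : ¬ Collinear ℝ (A : Set Pt)) (hB : ¬ Collinear ℝ (B : Set Pt))
    (huniq : ∀ a₁ ∈ A, ∀ b₁ ∈ B, ∀ a₂ ∈ A, ∀ b₂ ∈ B,
      a₁ + b₁ = a₂ + b₂ → a₁ = a₂ ∧ b₁ = b₂) :
    Real.sqrt (2 * (intCard (A + B) : ℝ) + (bdryCard (A + B) : ℝ) - 2) ≥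
      Real.sqrt (2 * (intCard A : ℝ) + (bdryCard A : ℝ) - 2) +
        Real.sqrt (2 * (intCard B : ℝ) + (bdryCard B : ℝ) - 2) := by
  have hcard : (A + B).card = A.card * B.card :=
    Finset.card_add_iff.mpr fun p hp q hq hpq =>
      Prod.ext_iff.mpr (huniq p.1 hp.1 p.2 hp.2 q.1 hq.1 q.2 hq.2 hpq)
  have hA2 : (2 : ℝ) ≤ bdryCard A := by
    exact_mod_cast two_le_bdryCard_of_one_lt_card (one_lt_card_of_not_collinear hA)
  have hB2 : (2 : ℝ) ≤ bdryCard B := by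
    exact_mod_cast two_le_bdryCard_of_one_lt_card (one_lt_card_of_not_collinear hB)
  have hAm : (bdryCard A : ℝ) ≤ A.card := by exact_mod_cast bdryCard_le_card A
  have hBn : (bdryCard B : ℝ) ≤ B.card := by exact_mod_cast bdryCard_le_card B
  have hAB : (bdryCard (A + B) : ℝ) ≤ bdryCard A * bdryCard B := by
    exact_mod_cast bdryCard_add_le A B
  rw [ge_iff_le, two_mul_intCard_add_bdryCard_sub_two, two_mul_intCard_add_bdryCard_sub_two,
    two_mul_intCard_add_bdryCard_sub_two, hcard, Nat.cast_mul]
  exact Real.sqrt_add_sqrt_le_sqrt_of_two_mul_add_le (by linarith) (by linarith)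
    (two_mul_add_two_mul_le_two_mul_mul_sub hA2 hAm hB2 hBn hAB)
end
end

section
/- Let A and B be finite non-collinear subsets of ℝ² with i_A ≥ 1. Then i_{A+B} ≥ i_A + |B| − 1. -/
open scoped Pointwise Classical RealInnerProductSpace

noncomputable section

/-!
Every interior point `a` of `A` stays interior in `A + B` after translation by any `b ∈ B`,
because `interior [A] + [B] ⊆ interior ([A] + [B]) = interior [A + B]`. Hence the interior
points of `A + B` contain `I + B`, where `I` is the (nonempty) set of interior points of `A`,
and the Cauchy–Davenport inequality `|I + B| ≥ |I| + |B| - 1` in the torsion-free group `ℝ²`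
gives the bound.
-/

open Finset

section

variable {E : Type*} [AddCommGroup E] [Module ℝ E] [TopologicalSpace E] [IsTopologicalAddGroup E]

-- For `E = Pt`, `#(interiorPoints A)` is `intCard A` definitionally.
def interiorPoints (A : Finset E) : Finset E :=
  A.filter (· ∈ interior (convexHull ℝ (A : Set E)))

lemma interiorPoints_add_subset [DecidableEq E] (A B : Finset E) :
    interiorPoints A + B ⊆ interiorPoints (A + B) := by
  intro x hx
  obtain ⟨a, ha, b, hb, rfl⟩ := mem_add.mp hx
  rw [interiorPoints, mem_filter] at ha ⊢
  refine ⟨add_mem_add ha.1 hb, ?_⟩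
  rw [coe_add, convexHull_add]
  exact subset_interior_add_left (Set.add_mem_add ha.2 (subset_convexHull ℝ _ hb))

end

theorem intCard_sum_ge_general
    (A B : Finset Pt) (hB : ¬ Collinear ℝ (B : Set Pt))
    (hiA : 1 ≤ intCard A) :
    (intCard (A + B) : ℤ) ≥ (intCard A : ℤ) + (B.card : ℤ) - 1 := by
  have : IsAddTorsionFree Pt := .of_module_rat Pt
  have hI : (interiorPoints A).Nonempty := card_pos.mp hiA
  have hBne : B.Nonempty := nonempty_iff_ne_empty.mpr fun h => hB (by simp [h, collinear_empty])
  have hCD : intCard A + #B - 1 ≤ #(interiorPoints A + B) :=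
    cauchy_davenport_of_isAddTorsionFree hI hBne
  have hsub : #(interiorPoints A + B) ≤ intCard (A + B) :=
    card_le_card (interiorPoints_add_subset A B)
  omega

theorem intCard_sum_ge
    (A B : Finset Pt) (hA : ¬ Collinear ℝ (A : Set Pt)) (hB : ¬ Collinear ℝ (B : Set Pt))
    (hiA : 1 ≤ intCard A) :
    (intCard (A + B) : ℤ) ≥ (intCard A : ℤ) + (B.card : ℤ) - 1 :=
  intCard_sum_ge_general A B hB hiA
end
end

section
/- Let A and B be finite non-collinear subsets of ℝ² with i_A ≥ 1 and i_B ≥ 1. Then 2 i_{A+B} ≥ 2 i_A + 2 i_B + b_A + b_B − 2. -/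
open scoped Pointwise Classical RealInnerProductSpace

noncomputable section

/-!
Every point of `A + int[B]` lies in the interior of `[A] + [B] = [A + B]`, so the
Cauchy–Davenport inequality for torsion-free groups gives `i_{A+B} ≥ |A| + i_B - 1`. Adding this
to its mirror image `i_{A+B} ≥ |B| + i_A - 1` and using `|A| = b_A + i_A` gives the claim.
-/

theorem add_interior_convexHull_subset {E : Type*} [AddCommGroup E] [Module ℝ E]
    [TopologicalSpace E] [IsTopologicalAddGroup E] (s t : Set E) :
    convexHull ℝ s + interior (convexHull ℝ t) ⊆ interior (convexHull ℝ (s + t)) := by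
  rw [convexHull_add]
  exact interior_maximal (Set.add_subset_add_left interior_subset) isOpen_interior.add_left

def interiorPart (A : Finset Pt) : Finset Pt :=
  A.filter fun x => x ∈ interior (convexHull ℝ (A : Set Pt))

theorem card_interiorPart (A : Finset Pt) : (interiorPart A).card = intCard A := rfl

theorem bdryCard_add_intCard (A : Finset Pt) : bdryCard A + intCard A = A.card := by
  have hclosed : IsClosed (convexHull ℝ (A : Set Pt)) :=
    A.finite_toSet.isClosed_convexHull (𝕜 := ℝ)
  have hfrontier : (A.filter fun x => x ∈ frontier (convexHull ℝ (A : Set Pt))) =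
      A.filter fun x => x ∉ interior (convexHull ℝ (A : Set Pt)) :=
    Finset.filter_congr fun x hx => by
      simp [hclosed.frontier_eq, subset_convexHull ℝ (A : Set Pt) hx]
  rw [bdryCard, intCard, hfrontier, add_comm]
  exact Finset.card_filter_add_card_filter_not _

theorem add_interiorPart_subset (A B : Finset Pt) :
    A + interiorPart B ⊆ interiorPart (A + B) := by
  simp only [Finset.subset_iff, Finset.mem_add, interiorPart, Finset.mem_filter]
  rintro _ ⟨a, ha, b, ⟨hb, hb_int⟩, rfl⟩
  refine ⟨⟨a, ha, b, hb, rfl⟩, ?_⟩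
  rw [Finset.coe_add]
  exact add_interior_convexHull_subset _ _
    (Set.add_mem_add (subset_convexHull ℝ (A : Set Pt) ha) hb_int)

theorem card_add_intCard_le (A B : Finset Pt) (hA : A.Nonempty) (hB : 1 ≤ intCard B) :
    A.card + intCard B ≤ intCard (A + B) + 1 := by
  have : IsAddTorsionFree Pt := .of_module_rat _
  have hB' : (interiorPart B).Nonempty := Finset.card_pos.mp hB
  have hCD := cauchy_davenport_of_isAddTorsionFree hA hB'
  have hsub := Finset.card_le_card (add_interiorPart_subset A B)
  rw [card_interiorPart] at hCD hsub
  omega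

theorem nonempty_of_one_le_intCard {A : Finset Pt} (h : 1 ≤ intCard A) : A.Nonempty := by
  rw [← Finset.card_pos]
  have := bdryCard_add_intCard A
  omega

theorem two_intCard_sum_ge_general
    (A B : Finset Pt)
    (hiA : 1 ≤ intCard A) (hiB : 1 ≤ intCard B) :
    2 * (intCard (A + B) : ℤ) ≥
      2 * (intCard A : ℤ) + 2 * (intCard B : ℤ) + (bdryCard A : ℤ) + (bdryCard B : ℤ) - 2 := by
  have hAB := card_add_intCard_le A B (nonempty_of_one_le_intCard hiA) hiB
  have hBA := card_add_intCard_le B A (nonempty_of_one_le_intCard hiB) hiA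
  rw [add_comm B A] at hBA
  have hA := bdryCard_add_intCard A
  have hB := bdryCard_add_intCard B
  omega

theorem two_intCard_sum_ge
    (A B : Finset Pt) (hA : ¬ Collinear ℝ (A : Set Pt)) (hB : ¬ Collinear ℝ (B : Set Pt))
    (hiA : 1 ≤ intCard A) (hiB : 1 ≤ intCard B) :
    2 * (intCard (A + B) : ℤ) ≥
      2 * (intCard A : ℤ) + 2 * (intCard B : ℤ) + (bdryCard A : ℤ) + (bdryCard B : ℤ) - 2 :=
  two_intCard_sum_ge_general A B hiA hiB
end
end

section
/- Let A and B be finite non-collinear subsets of ℝ², and let v be a unit vector. If a ∈ A_{v,upp} and b ∈ B_{v,low}, then a + b lies in the interior of the convex hull of A + B. -/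
/-!
If `a + b` lay on the boundary of `[A + B]`, a supporting line there (which exists because `A` is
non-collinear, so `[A + B]` has nonempty interior) would have a unit exterior normal `u` at
`a + b`. Since the maximum of `u` over `A + B` is the sum of its maxima over `A` and over `B`,
`u` is an exterior normal to `[A]` at `a` and to `[B]` at `b`, forcing both `u·v > 0` and `u·v < 0`.
-/

open scoped Pointwise Classical RealInnerProductSpace

noncomputable section

theorem affineSpan_eq_top_of_not_collinear {k V : Type*} [Field k] [AddCommGroup V] [Module k V]
    [FiniteDimensional k V] (hV : Module.finrank k V = 2) {s : Set V} (hs : ¬ Collinear k s) :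
    affineSpan k s = ⊤ := by
  have hne : s.Nonempty := Set.nonempty_iff_ne_empty.2 fun h => hs (h ▸ collinear_empty k V)
  rw [AffineSubspace.affineSpan_eq_top_iff_vectorSpan_eq_top_of_nonempty k V V hne]
  by_contra hlt
  have := Submodule.finrank_lt hlt
  exact hs (collinear_iff_finrank_le_one.2 (by omega))

theorem affineSpan_add_eq_top {k V : Type*} [Ring k] [AddCommGroup V] [Module k V] {s t : Set V}
    (hs : affineSpan k s = ⊤) (ht : t.Nonempty) : affineSpan k (s + t) = ⊤ := by
  obtain ⟨b, hb⟩ := ht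
  rw [eq_top_iff, ← AffineSubspace.pointwise_vadd_top b, ← hs,
    AffineSubspace.pointwise_vadd_span]
  refine affineSpan_mono k ?_
  rintro _ ⟨x, hx, rfl⟩
  exact ⟨x, hx, b, hb, add_comm x b⟩

namespace IsExtNormal

variable {A B : Finset Pt} {u a b : Pt}

theorem smul_s11 (h : IsExtNormal A u a) {c : ℝ} (hc : 0 ≤ c) : IsExtNormal A (c • u) a :=
  fun y hy => by
    simp only [real_inner_smul_left]
    exact mul_le_mul_of_nonneg_left (h y hy) hc

theorem of_add_left (h : IsExtNormal (A + B) u (a + b)) (hb : b ∈ B) : IsExtNormal A u a :=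
  fun y hy => by
    have := h (y + b) (Finset.add_mem_add hy hb)
    simp only [inner_add_right] at this
    linarith

theorem of_add_right (h : IsExtNormal (A + B) u (a + b)) (ha : a ∈ A) : IsExtNormal B u b :=
  fun y hy => by
    have := h (a + y) (Finset.add_mem_add ha hy)
    simp only [inner_add_right] at this
    linarith

end IsExtNormal

theorem exists_unit_isExtNormal_of_notMem_interior {A : Finset Pt} {x : Pt}
    (hint : (interior (convexHull ℝ (A : Set Pt))).Nonempty)
    (hx : x ∉ interior (convexHull ℝ (A : Set Pt))) :
    ∃ u : Pt, ‖u‖ = 1 ∧ IsExtNormal A u x := by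
  obtain ⟨f, c, hf0, hle, hge⟩ := geometric_hahn_banach_of_nonempty_interior
    (convex_convexHull ℝ _) (convex_singleton x) (Set.disjoint_singleton_right.2 hx) hint
    (Set.singleton_nonempty x)
  set w : Pt := (InnerProductSpace.toDual ℝ Pt).symm f
  have hw : ∀ y, ⟪w, y⟫ = f y := fun y => InnerProductSpace.toDual_symm_apply
  have hw0 : w ≠ 0 := by simpa [w] using hf0
  have hext : IsExtNormal A w x := fun y hy => by
    rw [hw, hw]
    exact (hle y (subset_convexHull ℝ _ hy)).trans (hge x rfl)
  exact ⟨‖w‖⁻¹ • w, norm_smul_inv_norm hw0, hext.smul_s11 (inv_nonneg.2 (norm_nonneg w))⟩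

theorem upper_add_lower_mem_interior_general
    (A B : Finset Pt) (hA : ¬ Collinear ℝ (A : Set Pt))
    (v : Pt)
    (a : Pt) (ha : a ∈ upperSet A v) (b : Pt) (hb : b ∈ lowerSet B v) :
    a + b ∈ interior (convexHull ℝ ((A + B : Finset Pt) : Set Pt)) := by
  obtain ⟨haA, -, hpos⟩ := Finset.mem_filter.1 ha
  obtain ⟨hbB, -, hneg⟩ := Finset.mem_filter.1 hb
  have hint : (interior (convexHull ℝ ((A + B : Finset Pt) : Set Pt))).Nonempty := by
    rw [interior_convexHull_nonempty_iff_affineSpan_eq_top, Finset.coe_add]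
    exact affineSpan_add_eq_top (affineSpan_eq_top_of_not_collinear finrank_euclideanSpace_fin hA)
      ⟨b, hbB⟩
  by_contra hab
  obtain ⟨u, hu, hext⟩ := exists_unit_isExtNormal_of_notMem_interior hint hab
  linarith [hpos u hu (hext.of_add_left hbB), hneg u hu (hext.of_add_right haA)]

theorem upper_add_lower_mem_interior
    (A B : Finset Pt) (hA : ¬ Collinear ℝ (A : Set Pt)) (hB : ¬ Collinear ℝ (B : Set Pt))
    (v : Pt) (hv : ‖v‖ = 1)
    (a : Pt) (ha : a ∈ upperSet A v) (b : Pt) (hb : b ∈ lowerSet B v) :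
    a + b ∈ interior (convexHull ℝ ((A + B : Finset Pt) : Set Pt)) :=
  upper_add_lower_mem_interior_general A B hA v a ha b hb
end
end
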